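/- arXiv:2404.08106 — 8 statements merged into one kernel-verified Lean document; each statement's English description precedes it below -/
import Mathlib

section
/- Given Imp programs c1 and c2, relational assertions Phi and Psi, and a CoreRel term r such that <<c1|c2>> is alignment-equivalent to r, if the Hoare triple {Phi} [[r]] {Psi} holds for the reified intermediate program [[r]], then c1 and c2 are relationally safe with respect to Phi and Psi: for all initial states st1, st2 whose disjoint union satisfies Phi, and all final states st1', st2' with st1, c1 ⇓ st1' and st2, c2 ⇓ st2', the disjoint union of st1' and st2' satisfies Psi. -/
inductive AExp (V : Type) where
  | num : ℤ → AExp V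
  | var : V → AExp V
  | add : AExp V → AExp V → AExp V
  | sub : AExp V → AExp V → AExp V
  | mul : AExp V → AExp V → AExp V

inductive BExp (V : Type) where
  | tru : BExp V
  | fls : BExp V
  | eq : AExp V → AExp V → BExp V
  | lt : AExp V → AExp V → BExp V
  | not : BExp V → BExp V
  | and : BExp V → BExp V → BExp V

inductive Com (V : Type) where
  | skip : Com V
  | seq : Com V → Com V → Com V
  | assign : V → AExp V → Com V
  | whileC : BExp V → Com V → Com V
  | ifC : BExp V → Com V → Com V → Com V

abbrev State (V : Type) := V → ℤ

def aeval {V : Type} (st : State V) : AExp V → ℤ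
  | .num n => n
  | .var x => st x
  | .add a b => aeval st a + aeval st b
  | .sub a b => aeval st a - aeval st b
  | .mul a b => aeval st a * aeval st b

def beval {V : Type} (st : State V) : BExp V → Bool
  | .tru => true
  | .fls => false
  | .eq a b => decide (aeval st a = aeval st b)
  | .lt a b => decide (aeval st a < aeval st b)
  | .not b => !(beval st b)
  | .and a b => beval st a && beval st b

/-- Standard big-step semantics of Imp. -/
inductive BigStep {V : Type} [DecidableEq V] : State V → Com V → State V → Prop where
  | skip {st} : BigStep st .skip st
  | assign {st x a} : BigStep st (.assign x a) (Function.update st x (aeval st a))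
  | seq {st st' st'' c1 c2} : BigStep st c1 st' → BigStep st' c2 st'' →
      BigStep st (.seq c1 c2) st''
  | ifTrue {st st' b c1 c2} : beval st b = true → BigStep st c1 st' →
      BigStep st (.ifC b c1 c2) st'
  | ifFalse {st st' b c1 c2} : beval st b = false → BigStep st c2 st' →
      BigStep st (.ifC b c1 c2) st'
  | whileFalse {st b c} : beval st b = false → BigStep st (.whileC b c) st
  | whileTrue {st st' st'' b c} : beval st b = true → BigStep st c st' →
      BigStep st' (.whileC b c) st'' → BigStep st (.whileC b c) st''

/-- CoreRel aligned programs. -/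
inductive CoreRel (V : Type) where
  | align : Com V → Com V → CoreRel V
  | seq : CoreRel V → CoreRel V → CoreRel V
  | ifR : BExp V → BExp V → CoreRel V → CoreRel V → CoreRel V
  | whileR : BExp V → BExp V → CoreRel V → CoreRel V

/-- Big-step semantics of CoreRel over pairs of states. -/
inductive RSem {V : Type} [DecidableEq V] :
    State V × State V → CoreRel V → State V × State V → Prop where
  | align {st1 st2 st1' st2' c1 c2} :
      BigStep st1 c1 st1' → BigStep st2 c2 st2' →
      RSem (st1, st2) (.align c1 c2) (st1', st2')
  | seq {s s' s'' r1 r2} : RSem s r1 s' → RSem s' r2 s'' → RSem s (.seq r1 r2) s''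
  | ifTrue {s s' b1 b2 r1 r2} : beval s.1 b1 = true → beval s.2 b2 = true →
      RSem s r1 s' → RSem s (.ifR b1 b2 r1 r2) s'
  | ifFalse {s s' b1 b2 r1 r2} : (beval s.1 b1 = false ∨ beval s.2 b2 = false) →
      RSem s r2 s' → RSem s (.ifR b1 b2 r1 r2) s'
  | whileFalse {s b1 b2 r} : (beval s.1 b1 = false ∨ beval s.2 b2 = false) →
      RSem s (.whileR b1 b2 r) s
  | whileTrue {s s' s'' b1 b2 r} : beval s.1 b1 = true → beval s.2 b2 = true →
      RSem s r s' → RSem s' (.whileR b1 b2 r) s'' → RSem s (.whileR b1 b2 r) s''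

/-- Alignment equivalence: the same relation on pairs of states. -/
def AlignEquiv {V : Type} [DecidableEq V] (r1 r2 : CoreRel V) : Prop :=
  ∀ s s', RSem s r1 s' ↔ RSem s r2 s'

def renameA {V W : Type} (ρ : V → W) : AExp V → AExp W
  | .num n => .num n
  | .var x => .var (ρ x)
  | .add a b => .add (renameA ρ a) (renameA ρ b)
  | .sub a b => .sub (renameA ρ a) (renameA ρ b)
  | .mul a b => .mul (renameA ρ a) (renameA ρ b)

def renameB {V W : Type} (ρ : V → W) : BExp V → BExp W
  | .tru => .tru
  | .fls => .fls
  | .eq a b => .eq (renameA ρ a) (renameA ρ b)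
  | .lt a b => .lt (renameA ρ a) (renameA ρ b)
  | .not b => .not (renameB ρ b)
  | .and a b => .and (renameB ρ a) (renameB ρ b)

def renameC {V W : Type} (ρ : V → W) : Com V → Com W
  | .skip => .skip
  | .seq c1 c2 => .seq (renameC ρ c1) (renameC ρ c2)
  | .assign x a => .assign (ρ x) (renameA ρ a)
  | .whileC b c => .whileC (renameB ρ b) (renameC ρ c)
  | .ifC b c1 c2 => .ifC (renameB ρ b) (renameC ρ c1) (renameC ρ c2)

/-- Reification of CoreRel into Imp over the disjoint-sum namespace,
using the injective, disjoint-range renamings `Sum.inl` and `Sum.inr`. -/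
def reify {V : Type} : CoreRel V → Com (V ⊕ V)
  | .align c1 c2 => .seq (renameC Sum.inl c1) (renameC Sum.inr c2)
  | .seq r1 r2 => .seq (reify r1) (reify r2)
  | .ifR b1 b2 r1 r2 =>
      .ifC (.and (renameB Sum.inl b1) (renameB Sum.inr b2)) (reify r1) (reify r2)
  | .whileR b1 b2 r =>
      .whileC (.and (renameB Sum.inl b1) (renameB Sum.inr b2)) (reify r)

lemma aeval_inl {V : Type} (st1 st2 : State V) (a : AExp V) :
    aeval (Sum.elim st1 st2) (renameA Sum.inl a) = aeval st1 a := by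
  induction a <;> simp [renameA, aeval, *]

lemma aeval_inr {V : Type} (st1 st2 : State V) (a : AExp V) :
    aeval (Sum.elim st1 st2) (renameA Sum.inr a) = aeval st2 a := by
  induction a <;> simp [renameA, aeval, *]

lemma beval_inl {V : Type} (st1 st2 : State V) (b : BExp V) :
    beval (Sum.elim st1 st2) (renameB Sum.inl b) = beval st1 b := by
  induction b <;> simp [renameB, beval, aeval_inl, *]

lemma beval_inr {V : Type} (st1 st2 : State V) (b : BExp V) :
    beval (Sum.elim st1 st2) (renameB Sum.inr b) = beval st2 b := by
  induction b <;> simp [renameB, beval, aeval_inr, *]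

lemma update_inl {V : Type} [DecidableEq V] (st1 st2 : State V) (x : V) (v : ℤ) :
    Function.update (Sum.elim st1 st2) (Sum.inl x) v
      = Sum.elim (Function.update st1 x v) st2 := by
  funext y
  cases y with
  | inl y => by_cases h : y = x <;> simp [Function.update, h]
  | inr y => simp [Function.update]

lemma update_inr {V : Type} [DecidableEq V] (st1 st2 : State V) (x : V) (v : ℤ) :
    Function.update (Sum.elim st1 st2) (Sum.inr x) v
      = Sum.elim st1 (Function.update st2 x v) := by
  funext y
  cases y with
  | inl y => simp [Function.update]
  | inr y => by_cases h : y = x <;> simp [Function.update, h]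

lemma bigstep_inl {V : Type} [DecidableEq V] {st st' : State V} {c : Com V}
    (h : BigStep st c st') : ∀ st2 : State V, BigStep (Sum.elim st st2) (renameC Sum.inl c)
      (Sum.elim st' st2) := by
  induction h with
  | skip => intro st2; exact .skip
  | @assign st x a =>
      intro st2
      have h := @BigStep.assign _ _ (Sum.elim st st2) (Sum.inl x) (renameA Sum.inl a)
      rwa [aeval_inl, update_inl] at h
  | seq _ _ ih1 ih2 => exact fun st2 => .seq (ih1 st2) (ih2 st2)
  | ifTrue hb _ ih => intro st2; exact .ifTrue (by rw [beval_inl]; exact hb) (ih st2)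
  | ifFalse hb _ ih => intro st2; exact .ifFalse (by rw [beval_inl]; exact hb) (ih st2)
  | whileFalse hb => intro st2; exact .whileFalse (by rw [beval_inl]; exact hb)
  | whileTrue hb _ _ ih1 ih2 =>
      intro st2; exact .whileTrue (by rw [beval_inl]; exact hb) (ih1 st2) (ih2 st2)

lemma bigstep_inr {V : Type} [DecidableEq V] {st st' : State V} {c : Com V}
    (h : BigStep st c st') : ∀ st1 : State V, BigStep (Sum.elim st1 st) (renameC Sum.inr c)
      (Sum.elim st1 st') := by
  induction h with
  | skip => intro st1; exact .skip
  | @assign st x a =>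
      intro st1
      have h := @BigStep.assign _ _ (Sum.elim st1 st) (Sum.inr x) (renameA Sum.inr a)
      rwa [aeval_inr, update_inr] at h
  | seq _ _ ih1 ih2 => exact fun st1 => .seq (ih1 st1) (ih2 st1)
  | ifTrue hb _ ih => intro st1; exact .ifTrue (by rw [beval_inr]; exact hb) (ih st1)
  | ifFalse hb _ ih => intro st1; exact .ifFalse (by rw [beval_inr]; exact hb) (ih st1)
  | whileFalse hb => intro st1; exact .whileFalse (by rw [beval_inr]; exact hb)
  | whileTrue hb _ _ ih1 ih2 =>
      intro st1; exact .whileTrue (by rw [beval_inr]; exact hb) (ih1 st1) (ih2 st1)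

lemma rsem_reify {V : Type} [DecidableEq V] {s s' : State V × State V} {r : CoreRel V}
    (h : RSem s r s') : BigStep (Sum.elim s.1 s.2) (reify r) (Sum.elim s'.1 s'.2) := by
  induction h with
  | align h1 h2 => exact .seq (bigstep_inl h1 _) (bigstep_inr h2 _)
  | seq _ _ ih1 ih2 => exact .seq ih1 ih2
  | ifTrue hb1 hb2 _ ih =>
      exact .ifTrue (by simp [reify, beval, beval_inl, beval_inr, hb1, hb2]) ih
  | ifFalse hb _ ih =>
      refine .ifFalse ?_ ih
      rcases hb with hb | hb <;> simp [reify, beval, beval_inl, beval_inr, hb]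
  | whileFalse hb =>
      refine .whileFalse ?_
      rcases hb with hb | hb <;> simp [reify, beval, beval_inl, beval_inr, hb]
  | whileTrue hb1 hb2 _ _ ih1 ih2 =>
      exact .whileTrue (by simp [reify, beval, beval_inl, beval_inr, hb1, hb2]) ih1 ih2

theorem relational_safety {V : Type} [DecidableEq V] (c1 c2 : Com V) (r : CoreRel V)
    (Phi Psi : State (V ⊕ V) → Prop)
    (heq : AlignEquiv (CoreRel.align c1 c2) r)
    (hoare : ∀ σ σ', Phi σ → BigStep σ (reify r) σ' → Psi σ') :
    ∀ st1 st2 : State V, Phi (Sum.elim st1 st2) →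
      ∀ st1' st2', BigStep st1 c1 st1' → BigStep st2 c2 st2' →
        Psi (Sum.elim st1' st2') := by
  intro st1 st2 hPhi st1' st2' h1 h2
  have hr : RSem (st1, st2) r (st1', st2') := (heq _ _).1 (.align h1 h2)
  exact hoare _ _ hPhi (rsem_reify hr)
end

section
/- The HOM-L law holds: for any Imp commands c1 and c2, the CoreRel term <<c1; c2 | skip>> is alignment-equivalent to <<c1 | skip>> ;; <<c2 | skip>>. Symmetrically (HOM-R), <<skip | c1; c2>> is alignment-equivalent to <<skip | c1>> ;; <<skip | c2>>. -/
theorem hom_l_and_hom_r {V : Type} [DecidableEq V] (c1 c2 : Com V) :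
    AlignEquiv (CoreRel.align (.seq c1 c2) .skip)
        (CoreRel.seq (CoreRel.align c1 .skip) (CoreRel.align c2 .skip)) ∧
      AlignEquiv (CoreRel.align .skip (.seq c1 c2))
        (CoreRel.seq (CoreRel.align .skip c1) (CoreRel.align .skip c2)) := by
  constructor
  · intro s s'
    constructor
    · intro h
      cases h with
      | align h1 h2 =>
        cases h2
        cases h1 with
        | seq ha hb =>
          exact RSem.seq (RSem.align ha BigStep.skip) (RSem.align hb BigStep.skip)
    · intro h
      cases h with
      | seq h1 h2 =>
        cases h1 with
        | align ha hs =>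
          cases hs
          cases h2 with
          | align hb hs2 =>
            cases hs2
            exact RSem.align (BigStep.seq ha hb) BigStep.skip
  · intro s s'
    constructor
    · intro h
      cases h with
      | align h2 h1 =>
        cases h2
        cases h1 with
        | seq ha hb =>
          exact RSem.seq (RSem.align BigStep.skip ha) (RSem.align BigStep.skip hb)
    · intro h
      cases h with
      | seq h1 h2 =>
        cases h1 with
        | align hs ha =>
          cases hs
          cases h2 with
          | align hs2 hb =>
            cases hs2
            exact RSem.align BigStep.skip (BigStep.seq ha hb)
end

section
/- The REL-COMM law holds: for any Imp commands c1 and c2, the CoreRel term <<c1 | skip>> ;; <<skip | c2>> is alignment-equivalent to <<skip | c2>> ;; <<c1 | skip>>. That is, a purely-left aligned command commutes with a purely-right aligned command under relational sequencing. -/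
theorem rel_comm {V : Type} [DecidableEq V] (c1 c2 : Com V) :
    AlignEquiv (CoreRel.seq (CoreRel.align c1 .skip) (CoreRel.align .skip c2))
      (CoreRel.seq (CoreRel.align .skip c2) (CoreRel.align c1 .skip)) := by
  intro s s'
  constructor
  · intro h
    cases h with
    | seq h1 h2 =>
      cases h1 with
      | align ha hb =>
        cases h2 with
        | align hc hd =>
          cases hb; cases hc
          exact RSem.seq (RSem.align BigStep.skip hd) (RSem.align ha BigStep.skip)
  · intro h
    cases h with
    | seq h1 h2 =>
      cases h1 with
      | align ha hb =>
        cases h2 with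
        | align hc hd =>
          cases ha; cases hd
          exact RSem.seq (RSem.align hc BigStep.skip) (RSem.align BigStep.skip hb)
end

section
/- The COND-L law holds: for any boolean expression b1 and Imp commands c1, c2, c3, the CoreRel term <<if b1 then c1 else c2 | c3>> is alignment-equivalent to ifR <<b1 | true>> then <<c1 | c3>> else <<c2 | c3>>. Symmetrically (COND-R), <<c1 | if b then c2 else c3>> is alignment-equivalent to ifR <<true | b>> then <<c1 | c2>> else <<c1 | c3>>. -/
theorem cond_l_and_cond_r {V : Type} [DecidableEq V] :
    (∀ (b1 : BExp V) (c1 c2 c3 : Com V),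
      AlignEquiv (CoreRel.align (.ifC b1 c1 c2) c3)
        (CoreRel.ifR b1 .tru (CoreRel.align c1 c3) (CoreRel.align c2 c3))) ∧
    (∀ (b : BExp V) (c1 c2 c3 : Com V),
      AlignEquiv (CoreRel.align c1 (.ifC b c2 c3))
        (CoreRel.ifR .tru b (CoreRel.align c1 c2) (CoreRel.align c1 c3))) := by

  constructor
  · intro b1 c1 c2 c3 s s'
    constructor
    · rintro ⟨h1, h3⟩
      cases h1 with
      | ifTrue hb h => exact RSem.ifTrue hb rfl (RSem.align h h3)
      | ifFalse hb h => exact RSem.ifFalse (Or.inl hb) (RSem.align h h3)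
    · intro h
      cases h with
      | ifTrue hb _ h =>
        cases h with | align h1 h3 => exact RSem.align (BigStep.ifTrue hb h1) h3
      | ifFalse hb h =>
        cases h with | align h1 h3 =>
          rcases hb with hb | hb
          · exact RSem.align (BigStep.ifFalse hb h1) h3
          · simp [beval] at hb
  · intro b c1 c2 c3 s s'
    constructor
    · rintro ⟨h1, h3⟩
      cases h3 with
      | ifTrue hb h => exact RSem.ifTrue rfl hb (RSem.align h1 h)
      | ifFalse hb h => exact RSem.ifFalse (Or.inr hb) (RSem.align h1 h)
    · intro h
      cases h with
      | ifTrue _ hb h =>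
        cases h with | align h1 h3 => exact RSem.align h1 (BigStep.ifTrue hb h3)
      | ifFalse hb h =>
        cases h with | align h1 h3 =>
          rcases hb with hb | hb
          · simp [beval] at hb
          · exact RSem.align h1 (BigStep.ifFalse hb h3)
end

section
/- The IF-ALIGN law holds: for any boolean expressions b1, b2 and commands c1, c2, c3, c4, the CoreRel term <<if b1 then c1 else c2 | if b2 then c3 else c4>> is alignment-equivalent to ifR <<b1 | b2>> then <<c1 | c3>> else (ifR <<b1 | not b2>> then <<c1 | c4>> else (ifR <<not b1 | b2>> then <<c2 | c3>> else <<c2 | c4>>)). -/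
theorem if_align {V : Type} [DecidableEq V] (b1 b2 : BExp V) (c1 c2 c3 c4 : Com V) :
    AlignEquiv (CoreRel.align (.ifC b1 c1 c2) (.ifC b2 c3 c4))
      (CoreRel.ifR b1 b2 (CoreRel.align c1 c3)
        (CoreRel.ifR b1 (.not b2) (CoreRel.align c1 c4)
          (CoreRel.ifR (.not b1) b2 (CoreRel.align c2 c3)
            (CoreRel.align c2 c4)))) := by
  intro s s'
  obtain ⟨st1, st2⟩ := s
  obtain ⟨st1', st2'⟩ := s'
  constructor
  · rintro ⟨⟩
    rename_i h1 h2
    cases h1 with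
    | ifTrue hb1 hc1 =>
      cases h2 with
      | ifTrue hb2 hc2 => exact .ifTrue hb1 hb2 (.align hc1 hc2)
      | ifFalse hb2 hc2 =>
        exact .ifFalse (Or.inr hb2)
          (.ifTrue hb1 (by simp [beval, hb2]) (.align hc1 hc2))
    | ifFalse hb1 hc1 =>
      cases h2 with
      | ifTrue hb2 hc2 =>
        exact .ifFalse (Or.inl hb1) (.ifFalse (Or.inl hb1)
          (.ifTrue (by simp [beval, hb1]) hb2 (.align hc1 hc2)))
      | ifFalse hb2 hc2 =>
        exact .ifFalse (Or.inl hb1) (.ifFalse (Or.inl hb1)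
          (.ifFalse (Or.inr hb2) (.align hc1 hc2)))
  · intro h
    cases h with
    | ifTrue hb1 hb2 h =>
      cases h
      rename_i hc1 hc2
      exact .align (.ifTrue hb1 hc1) (.ifTrue hb2 hc2)
    | ifFalse hor h =>
      cases h with
      | ifTrue hb1 hb2 h =>
        cases h
        rename_i hc1 hc2
        simp only [beval, Bool.not_eq_true'] at hb2
        exact .align (.ifTrue hb1 hc1) (.ifFalse hb2 hc2)
      | ifFalse hor2 h =>
        cases h with
        | ifTrue hb1 hb2 h =>
          cases h
          rename_i hc1 hc2
          simp only [beval, Bool.not_eq_true'] at hb1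
          exact .align (.ifFalse hb1 hc1) (.ifTrue hb2 hc2)
        | ifFalse hor3 h =>
          cases h
          rename_i hc1 hc2
          simp only [beval, Bool.not_eq_false'] at hor2 hor3
          have hb1 : beval st1 b1 = false := by
            rcases hor with h | h <;> rcases hor2 with h2 | h2 <;>
              rcases hor3 with h3 | h3 <;> simp_all
          have hb2 : beval st2 b2 = false := by
            rcases hor with h | h <;> rcases hor2 with h2 | h2 <;>
              rcases hor3 with h3 | h3 <;> simp_all
          exact .align (.ifFalse hb1 hc1) (.ifFalse hb2 hc2)
end

section
/- The WHILE-ALIGN law (lockstep case, n = m = 1) holds: for any boolean expressions b1, b2 and commands c1, c2, the CoreRel term <<while b1 c1 | while b2 c2>> is alignment-equivalent to (whileR <<b1 | b2>> <<c1 | c2>>) ;; <<while b1 c1 | skip>> ;; <<skip | while b2 c2>>. -/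
lemma while_align_fwd {V : Type} [DecidableEq V] {b1 b2 : BExp V} {c1 c2 : Com V} :
    ∀ {st1 c st1'}, BigStep st1 c st1' → c = .whileC b1 c1 →
    ∀ {st2 st2'}, BigStep st2 (.whileC b2 c2) st2' →
    ∃ m1 m2, RSem (st1, st2) (.whileR b1 b2 (.align c1 c2)) (m1, m2) ∧
      BigStep m1 (.whileC b1 c1) st1' ∧ BigStep m2 (.whileC b2 c2) st2' := by
  intro st1 c st1' h1
  induction h1 with
  | skip => intro h; cases h
  | assign => intro h; cases h
  | seq _ _ _ _ => intro h; cases h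
  | ifTrue _ _ _ => intro h; cases h
  | ifFalse _ _ _ => intro h; cases h
  | whileFalse hb =>
    intro heq st2 st2' h2
    cases heq
    exact ⟨_, _, RSem.whileFalse (Or.inl hb), BigStep.whileFalse hb, h2⟩
  | whileTrue hb hc hw _ ih =>
    intro heq st2 st2' h2
    cases heq
    cases h2 with
    | whileFalse hb2 =>
      exact ⟨_, _, RSem.whileFalse (Or.inr hb2),
        BigStep.whileTrue hb hc hw, BigStep.whileFalse hb2⟩
    | whileTrue hb2 hc2 hw2 =>
      obtain ⟨m1, m2, hr, hm1, hm2⟩ := ih rfl hw2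
      exact ⟨m1, m2, RSem.whileTrue hb hb2 (RSem.align hc hc2) hr, hm1, hm2⟩

lemma while_align_bwd {V : Type} [DecidableEq V] {b1 b2 : BExp V} {c1 c2 : Com V} :
    ∀ {s r s'}, RSem s r s' → r = .whileR b1 b2 (.align c1 c2) →
    ∀ {t1 t2}, BigStep s'.1 (.whileC b1 c1) t1 → BigStep s'.2 (.whileC b2 c2) t2 →
    BigStep s.1 (.whileC b1 c1) t1 ∧ BigStep s.2 (.whileC b2 c2) t2 := by
  intro s r s' h
  induction h with
  | align _ _ => intro h; cases h
  | seq _ _ _ _ => intro h; cases h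
  | ifTrue _ _ _ _ => intro h; cases h
  | ifFalse _ _ _ => intro h; cases h
  | whileFalse _ =>
    intro _ t1 t2 h1 h2; exact ⟨h1, h2⟩
  | whileTrue hb1 hb2 hstep _ _ ih =>
    intro heq t1 t2 h1 h2
    cases heq
    cases hstep with
    | align ha1 ha2 =>
      obtain ⟨k1, k2⟩ := ih rfl h1 h2
      exact ⟨BigStep.whileTrue hb1 ha1 k1, BigStep.whileTrue hb2 ha2 k2⟩

theorem while_align_lockstep {V : Type} [DecidableEq V]
    (b1 b2 : BExp V) (c1 c2 : Com V) :
    AlignEquiv (CoreRel.align (.whileC b1 c1) (.whileC b2 c2))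
      (CoreRel.seq (CoreRel.whileR b1 b2 (CoreRel.align c1 c2))
        (CoreRel.seq (CoreRel.align (.whileC b1 c1) .skip)
          (CoreRel.align .skip (.whileC b2 c2)))) := by
  intro s s'
  constructor
  · rintro ⟨h1, h2⟩
    obtain ⟨m1, m2, hr, hm1, hm2⟩ := while_align_fwd h1 rfl h2
    exact RSem.seq hr (RSem.seq (RSem.align hm1 BigStep.skip)
      (RSem.align BigStep.skip hm2))
  · intro h
    cases h with
    | seq hr hrest =>
      cases hrest with
      | seq ha hb =>
        cases ha with
        | align hm1 hsk1 =>
          cases hb with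
          | align hsk2 hm2 =>
            cases hsk1; cases hsk2
            obtain ⟨k1, k2⟩ := while_align_bwd hr rfl hm1 hm2
            exact RSem.align k1 k2
end

section
/- The general WHILE-ALIGN law with stuttering holds: for any boolean expressions b1, b2, commands c1, c2, and positive naturals n, m, the term <<while b1 c1 | while b2 c2>> is alignment-equivalent to (whileSt n m <<b1 | b2>> <<c1 | c2>>) ;; <<while b1 c1 | skip>> ;; <<skip | while b2 c2>>, where whileSt n m <<b1|b2>> <<c1|c2>> abbreviates whileR <<b1 | b2>> applied to the alignment of n guarded copies of c1 with m guarded copies of c2, i.e., whileR <<b1|b2>> <<(if b1 then c1)^n | (if b2 then c2)^m>> with (if b then c)^k denoting the k-fold sequential composition of 'if b then c else skip'. -/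
/-- `iterIf b c k` is the k-fold sequential composition of `if b then c else skip`. -/
def iterIf {V : Type} (b : BExp V) (c : Com V) : ℕ → Com V
  | 0 => .skip
  | k + 1 => .seq (.ifC b c .skip) (iterIf b c k)

/-- Stuttered relational loop: `whileSt n m <<b1|b2>> <<c1|c2>>`. -/
def whileSt {V : Type} (n m : ℕ) (b1 b2 : BExp V) (c1 c2 : Com V) : CoreRel V :=
  .whileR b1 b2 (.align (iterIf b1 c1 n) (iterIf b2 c2 m))

section Aux

variable {V : Type} [DecidableEq V]

/-- `Iter b c k st st'`: exactly `k` iterations of the loop body, ending with guard false. -/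
inductive Iter (b : BExp V) (c : Com V) : ℕ → State V → State V → Prop where
  | done {st} : beval st b = false → Iter b c 0 st st
  | step {k st st' st''} : beval st b = true → BigStep st c st' →
      Iter b c k st' st'' → Iter b c (k + 1) st st''

lemma iter_of_while {b : BExp V} {c : Com V} {st st' : State V}
    (h : BigStep st (.whileC b c) st') : ∃ k, Iter b c k st st' := by
  generalize hw : Com.whileC b c = w at h
  induction h with
  | skip => exact absurd hw (by simp)
  | assign => exact absurd hw (by simp)
  | seq _ _ _ _ => exact absurd hw (by simp)
  | ifTrue _ _ _ => exact absurd hw (by simp)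
  | ifFalse _ _ _ => exact absurd hw (by simp)
  | whileFalse hb =>
      cases hw
      exact ⟨0, Iter.done hb⟩
  | whileTrue hb hc _ _ ih =>
      cases hw
      obtain ⟨k, hk⟩ := ih rfl
      exact ⟨k + 1, Iter.step hb hc hk⟩

lemma while_of_iter {b : BExp V} {c : Com V} {k : ℕ} {st st' : State V}
    (h : Iter b c k st st') : BigStep st (.whileC b c) st' := by
  induction h with
  | done hb => exact BigStep.whileFalse hb
  | step hb hc _ ih => exact BigStep.whileTrue hb hc ih

lemma iter_zero_guard {b : BExp V} {c : Com V} {st st' : State V}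
    (h : Iter b c 0 st st') : beval st b = false ∧ st' = st := by
  cases h with
  | done hb => exact ⟨hb, rfl⟩

/-- Running `iterIf b c j` from a state that completes the loop in `k` steps
reaches the state after `min j k` steps. -/
lemma iterIf_run {b : BExp V} {c : Com V} :
    ∀ (j : ℕ) {k : ℕ} {st st' : State V}, Iter b c k st st' →
      ∃ mid k', BigStep st (iterIf b c j) mid ∧ Iter b c k' mid st' ∧
        k' + min j k = k := by
  intro j
  induction j with
  | zero =>
      intro k st st' h
      exact ⟨st, k, BigStep.skip, h, by simp⟩
  | succ j ih =>
      intro k st st' h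
      cases h with
      | done hb =>
          obtain ⟨mid, k', h1, h2, h3⟩ := ih (Iter.done hb)
          refine ⟨mid, k', BigStep.seq (BigStep.ifFalse hb BigStep.skip) h1, h2, ?_⟩
          simpa using h3
      | step hb hc ht =>
          obtain ⟨mid, k', h1, h2, h3⟩ := ih ht
          refine ⟨mid, k', BigStep.seq (BigStep.ifTrue hb hc) h1, h2, ?_⟩
          omega

lemma iterIf_while {b : BExp V} {c : Com V} :
    ∀ (j : ℕ) {st mid t : State V}, BigStep st (iterIf b c j) mid →
      BigStep mid (.whileC b c) t → BigStep st (.whileC b c) t := by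
  intro j
  induction j with
  | zero =>
      intro st mid t h hw
      cases h; exact hw
  | succ j ih =>
      intro st mid t h hw
      cases h with
      | seq h1 h2 =>
          cases h1 with
          | ifTrue hb hc => exact BigStep.whileTrue hb hc (ih h2 hw)
          | ifFalse hb hs => cases hs; exact ih h2 hw

lemma fwd_whileSt {b1 b2 : BExp V} {c1 c2 : Com V} {n m : ℕ} (hn : 0 < n) (hm : 0 < m) :
    ∀ (N k1 k2 : ℕ) {st1 st2 st1' st2' : State V}, k1 + k2 ≤ N →
      Iter b1 c1 k1 st1 st1' → Iter b2 c2 k2 st2 st2' →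
      ∃ mid1 mid2, RSem (st1, st2) (whileSt n m b1 b2 c1 c2) (mid1, mid2) ∧
        BigStep mid1 (.whileC b1 c1) st1' ∧ BigStep mid2 (.whileC b2 c2) st2' := by
  intro N
  induction N with
  | zero =>
      intro k1 k2 st1 st2 st1' st2' hN h1 h2
      have hk1 : k1 = 0 := by omega
      have hk2 : k2 = 0 := by omega
      subst hk1; subst hk2
      obtain ⟨hb1, _⟩ := iter_zero_guard h1
      exact ⟨st1, st2, RSem.whileFalse (Or.inl hb1), while_of_iter h1, while_of_iter h2⟩
  | succ N ih =>
      intro k1 k2 st1 st2 st1' st2' hN h1 h2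
      by_cases hg1 : beval st1 b1 = true
      · by_cases hg2 : beval st2 b2 = true
        · -- both guards true; k1, k2 > 0
          have hk1 : 0 < k1 := by
            cases h1 with
            | done hb => rw [hb] at hg1; exact absurd hg1 (by simp)
            | step _ _ _ => omega
          have hk2 : 0 < k2 := by
            cases h2 with
            | done hb => rw [hb] at hg2; exact absurd hg2 (by simp)
            | step _ _ _ => omega
          obtain ⟨mid1, k1', r1, i1, e1⟩ := iterIf_run n h1
          obtain ⟨mid2, k2', r2, i2, e2⟩ := iterIf_run m h2
          have hlt1 : k1' < k1 := by have := Nat.min_le_left n k1; omega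
          have hlt2 : k2' < k2 := by omega
          obtain ⟨f1, f2, hr, hw1, hw2⟩ := ih k1' k2' (by omega) i1 i2
          exact ⟨f1, f2, RSem.whileTrue hg1 hg2 (RSem.align r1 r2) hr, hw1, hw2⟩
        · exact ⟨st1, st2, RSem.whileFalse (Or.inr (by simpa using hg2)),
            while_of_iter h1, while_of_iter h2⟩
      · exact ⟨st1, st2, RSem.whileFalse (Or.inl (by simpa using hg1)),
          while_of_iter h1, while_of_iter h2⟩

lemma bwd_whileSt {b1 b2 : BExp V} {c1 c2 : Com V} {n m : ℕ}
    {s s' : State V × State V}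
    (h : RSem s (whileSt n m b1 b2 c1 c2) s') :
    (∀ t1, BigStep s'.1 (.whileC b1 c1) t1 → BigStep s.1 (.whileC b1 c1) t1) ∧
    (∀ t2, BigStep s'.2 (.whileC b2 c2) t2 → BigStep s.2 (.whileC b2 c2) t2) := by
  unfold whileSt at h
  generalize hw : CoreRel.whileR b1 b2 (.align (iterIf b1 c1 n) (iterIf b2 c2 m)) = w at h
  induction h with
  | align _ _ => exact absurd hw (by simp)
  | seq _ _ _ _ => exact absurd hw (by simp)
  | ifTrue _ _ _ _ => exact absurd hw (by simp)
  | ifFalse _ _ _ => exact absurd hw (by simp)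
  | whileFalse _ => exact ⟨fun _ h => h, fun _ h => h⟩
  | whileTrue _ _ hb _ _ ih =>
      cases hw
      obtain ⟨ih1, ih2⟩ := ih rfl
      cases hb with
      | align r1 r2 =>
          exact ⟨fun t1 ht => iterIf_while n r1 (ih1 t1 ht),
                 fun t2 ht => iterIf_while m r2 (ih2 t2 ht)⟩

end Aux

theorem while_align_stutter {V : Type} [DecidableEq V]
    (b1 b2 : BExp V) (c1 c2 : Com V) (n m : ℕ) (hn : 0 < n) (hm : 0 < m) :
    AlignEquiv (CoreRel.align (.whileC b1 c1) (.whileC b2 c2))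
      (CoreRel.seq (whileSt n m b1 b2 c1 c2)
        (CoreRel.seq (CoreRel.align (.whileC b1 c1) .skip)
          (CoreRel.align .skip (.whileC b2 c2)))) := by
  intro s s'
  constructor
  · intro h
    cases h with
    | align hw1 hw2 =>
        obtain ⟨k1, h1⟩ := iter_of_while hw1
        obtain ⟨k2, h2⟩ := iter_of_while hw2
        obtain ⟨mid1, mid2, hr, hm1, hm2⟩ :=
          fwd_whileSt hn hm (k1 + k2) k1 k2 le_rfl h1 h2
        exact RSem.seq hr (RSem.seq (RSem.align hm1 BigStep.skip)
          (RSem.align BigStep.skip hm2))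
  · intro h
    cases h with
    | seq h1 h23 =>
        cases h23 with
        | seq h2 h3 =>
            cases h2 with
            | align hw1 hs2 =>
                cases hs2
                cases h3 with
                | align hs1 hw2 =>
                    cases hs1
                    obtain ⟨ih1, ih2⟩ := bwd_whileSt h1
                    obtain ⟨s1, s2⟩ := s
                    exact RSem.align (ih1 _ hw1) (ih2 _ hw2)
end

section
/- For the lockstep fusion of two loops with identical iteration counts, the runoff loops never execute: if (st1, st2), whileR <<b1 | b2>> <<c1 | c2>> ---> (st1', st2'), and additionally b1 evaluates to false in st1' exactly when b2 evaluates to false in st2' (i.e., the fused loop only ever exits with both conditions false), then (st1', st2'), <<while b1 c1 | skip>> ;; <<skip | while b2 c2>> ---> (st1', st2'). Consequently, under this synchronization condition, <<while b1 c1 | while b2 c2>> takes (st1,st2) to (st1',st2') iff whileR <<b1|b2>> <<c1|c2>> does. -/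
lemma whileR_exit {V : Type} [DecidableEq V] {b1 b2 : BExp V} {r : CoreRel V}
    {s s' : State V × State V} (h : RSem s (CoreRel.whileR b1 b2 r) s') :
    beval s'.1 b1 = false ∨ beval s'.2 b2 = false := by
  generalize hr : CoreRel.whileR b1 b2 r = w at h
  induction h with
  | whileFalse hb => cases hr; exact hb
  | whileTrue _ _ _ _ _ ih => exact ih hr
  | _ => cases hr

lemma whileR_to_bigstep {V : Type} [DecidableEq V] {b1 b2 : BExp V} {c1 c2 : Com V}
    {s s' : State V × State V}
    (h : RSem s (CoreRel.whileR b1 b2 (CoreRel.align c1 c2)) s')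
    (h1 : beval s'.1 b1 = false) (h2 : beval s'.2 b2 = false) :
    BigStep s.1 (.whileC b1 c1) s'.1 ∧ BigStep s.2 (.whileC b2 c2) s'.2 := by
  generalize hr : CoreRel.whileR b1 b2 (CoreRel.align c1 c2) = w at h
  induction h with
  | whileFalse hb => cases hr; exact ⟨.whileFalse h1, .whileFalse h2⟩
  | whileTrue hb1 hb2 hbody _ _ ih =>
      cases hr
      obtain ⟨ih1, ih2⟩ := ih h1 h2 rfl
      cases hbody with
      | align ha1 ha2 => exact ⟨.whileTrue hb1 ha1 ih1, .whileTrue hb2 ha2 ih2⟩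
  | _ => cases hr

theorem runoff_never_executes {V : Type} [DecidableEq V]
    (b1 b2 : BExp V) (c1 c2 : Com V) (st1 st2 st1' st2' : State V)
    (h : RSem (st1, st2) (CoreRel.whileR b1 b2 (CoreRel.align c1 c2)) (st1', st2'))
    (hsync : beval st1' b1 = false ↔ beval st2' b2 = false) :
    RSem (st1', st2')
        (CoreRel.seq (CoreRel.align (.whileC b1 c1) .skip)
          (CoreRel.align .skip (.whileC b2 c2)))
        (st1', st2') ∧
      (RSem (st1, st2) (CoreRel.align (.whileC b1 c1) (.whileC b2 c2)) (st1', st2') ↔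
        RSem (st1, st2) (CoreRel.whileR b1 b2 (CoreRel.align c1 c2)) (st1', st2')) := by
  have hexit := whileR_exit h
  have hf1 : beval st1' b1 = false := by
    rcases hexit with h1 | h2
    · exact h1
    · exact hsync.mpr h2
  have hf2 : beval st2' b2 = false := hsync.mp hf1
  refine ⟨.seq (.align (.whileFalse hf1) .skip) (.align .skip (.whileFalse hf2)), ?_⟩
  constructor
  · intro _; exact h
  · intro hw
    obtain ⟨hb1, hb2⟩ := whileR_to_bigstep hw hf1 hf2
    exact .align hb1 hb2
end
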